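/- arXiv:1002.2176 — 3 statements merged into one kernel-verified Lean document; each statement's English description precedes it below -/
import Mathlib

section
/- Let X, Y be normed vector spaces, J̃ a bounded symmetric bilinear form on X weakly continuous in each argument with J(x) = J̃(x,x) ≥ 0 vanishing only at 0, and suppose the sublevel sets {x : J(x) ≤ c} are weakly compact for every c > 0. Let A : X → Y be a continuous surjective linear operator. Then for every y ∈ Y the problem of minimizing J over the affine set {x : Ax = y} has a global minimizer. -/
/-!
Take a minimizing sequence on the affine set `{x | A x = y}`; its values of `J` are bounded,
so a subsequence converges weakly to some `x̄`. Weak limits stay in the affine set, since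
`g ∘ A` is a continuous functional for every `g` in the dual of `Y`. Finally `J` is weakly
lower semicontinuous: from `0 ≤ J (u - x̄)` we get `2 J̃(u, x̄) - J x̄ ≤ J u`, and the left side
tends to `J x̄` along the subsequence.
-/

open Filter Topology

def WeakConv {X : Type*} [NormedAddCommGroup X] [NormedSpace ℝ X]
    (u : ℕ → X) (x : X) : Prop :=
  ∀ f : X →L[ℝ] ℝ, Filter.Tendsto (fun n => f (u n)) Filter.atTop (nhds (f x))

section

variable {X Y : Type*} [NormedAddCommGroup X] [NormedSpace ℝ X]
  [NormedAddCommGroup Y] [NormedSpace ℝ Y]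

theorem WeakConv.map_eq_of_forall_map_eq {u : ℕ → X} {x : X} (h : WeakConv u x)
    (A : X →L[ℝ] Y) {y : Y} (hu : ∀ n, A (u n) = y) : A x = y := by
  refine (SeparatingDual.eq_iff_forall_dual_eq (R := ℝ)).2 fun g => ?_
  have hlim := h (g.comp A)
  simp only [ContinuousLinearMap.comp_apply, hu] at hlim
  exact tendsto_nhds_unique hlim tendsto_const_nhds

theorem LinearMap.two_mul_apply_sub_apply_self_le {M : Type*} [AddCommGroup M] [Module ℝ M]
    (Jt : M →ₗ[ℝ] M →ₗ[ℝ] ℝ) (hsymm : ∀ x y, Jt x y = Jt y x) (hpos : ∀ x, 0 ≤ Jt x x)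
    (u x : M) : 2 * Jt u x - Jt x x ≤ Jt u u := by
  have h := hpos (u - x)
  simp only [map_sub, LinearMap.sub_apply] at h
  linarith [hsymm x u]

theorem LinearMap.apply_self_le_of_tendsto {M : Type*} [AddCommGroup M] [Module ℝ M]
    (Jt : M →ₗ[ℝ] M →ₗ[ℝ] ℝ) (hsymm : ∀ x y, Jt x y = Jt y x) (hpos : ∀ x, 0 ≤ Jt x x)
    {u : ℕ → M} {x : M} (hux : Tendsto (fun n => Jt (u n) x) atTop (𝓝 (Jt x x)))
    {L : ℝ} (hL : Tendsto (fun n => Jt (u n) (u n)) atTop (𝓝 L)) : Jt x x ≤ L := by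
  have hlower : Tendsto (fun n => 2 * Jt (u n) x - Jt x x) atTop (𝓝 (Jt x x)) := by
    simpa [two_mul] using (hux.const_mul 2).sub_const (Jt x x)
  exact le_of_tendsto_of_tendsto' hlower hL fun n =>
    LinearMap.two_mul_apply_sub_apply_self_le Jt hsymm hpos _ _

theorem exists_seq_tendsto_sInf_image {α : Type*} {f : α → ℝ} {s : Set α} (hs : s.Nonempty)
    (hf : BddBelow (f '' s)) :
    ∃ u : ℕ → α, (∀ n, u n ∈ s) ∧ Antitone (f ∘ u) ∧
      Tendsto (f ∘ u) atTop (𝓝 (sInf (f '' s))) := by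
  obtain ⟨v, hanti, hlim, hmem⟩ := exists_seq_tendsto_sInf (hs.image f) hf
  choose u hus hfu using hmem
  have hv : f ∘ u = v := funext hfu
  exact ⟨u, hus, hv ▸ hanti, hv ▸ hlim⟩

end

theorem exists_global_minimizer_general
    {X Y : Type*} [NormedAddCommGroup X] [NormedSpace ℝ X]
    [NormedAddCommGroup Y] [NormedSpace ℝ Y]
    (Jt : X →ₗ[ℝ] X →ₗ[ℝ] ℝ)
    (hsymm : ∀ x y, Jt x y = Jt y x)
    (hweak : ∀ (y : X) (u : ℕ → X) (x : X), WeakConv u x →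
      Filter.Tendsto (fun n => Jt (u n) y) Filter.atTop (nhds (Jt x y)))
    (J : X → ℝ) (hJ : ∀ x, J x = Jt x x)
    (hpos : ∀ x, 0 ≤ J x)
    (hcompact : ∀ c > (0:ℝ), ∀ u : ℕ → X, (∀ n, J (u n) ≤ c) →
      ∃ (x : X) (φ : ℕ → ℕ), StrictMono φ ∧ J x ≤ c ∧ WeakConv (u ∘ φ) x)
    (A : X →L[ℝ] Y) (hA : Function.Surjective A) :
    ∀ y : Y, ∃ xbar : X, A xbar = y ∧ ∀ x : X, A x = y → J xbar ≤ J x := by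
  intro y
  obtain rfl : J = fun x => Jt x x := funext hJ
  have hbdd : BddBelow ((fun x => Jt x x) '' {x | A x = y}) :=
    ⟨0, by rintro _ ⟨x, -, rfl⟩; exact hpos x⟩
  obtain ⟨u, hu, hanti, hlim⟩ := exists_seq_tendsto_sInf_image (hA y) hbdd
  obtain ⟨xbar, φ, hφ, -, hwc⟩ := hcompact (Jt (u 0) (u 0) + 1) (by linarith [hpos (u 0)]) u
    fun n => (hanti (Nat.zero_le n)).trans (by simp)
  have hle : Jt xbar xbar ≤ sInf ((fun x => Jt x x) '' {x | A x = y}) :=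
    LinearMap.apply_self_le_of_tendsto Jt hsymm hpos (hweak xbar _ xbar hwc)
      (hlim.comp hφ.tendsto_atTop)
  exact ⟨xbar, hwc.map_eq_of_forall_map_eq A fun n => hu (φ n),
    fun x hx => hle.trans (csInf_le hbdd ⟨x, hx, rfl⟩)⟩

/-- existence of a global minimizer of the quadratic form `J` on the
affine set `{x : A x = y}`. -/
theorem exists_global_minimizer
    {X Y : Type*} [NormedAddCommGroup X] [NormedSpace ℝ X]
    [NormedAddCommGroup Y] [NormedSpace ℝ Y]
    (Jt : X →ₗ[ℝ] X →ₗ[ℝ] ℝ)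
    (hsymm : ∀ x y, Jt x y = Jt y x)
    (hbdd : ∃ M : ℝ, ∀ x y, |Jt x y| ≤ M * ‖x‖ * ‖y‖)
    (hweak : ∀ (y : X) (u : ℕ → X) (x : X), WeakConv u x →
      Filter.Tendsto (fun n => Jt (u n) y) Filter.atTop (nhds (Jt x y)))
    (J : X → ℝ) (hJ : ∀ x, J x = Jt x x)
    (hpos : ∀ x, 0 ≤ J x)
    (hzero : ∀ x, J x = 0 → x = 0)
    (hcompact : ∀ c > (0:ℝ), ∀ u : ℕ → X, (∀ n, J (u n) ≤ c) →
      ∃ (x : X) (φ : ℕ → ℕ), StrictMono φ ∧ J x ≤ c ∧ WeakConv (u ∘ φ) x)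
    (A : X →L[ℝ] Y) (hA : Function.Surjective A) :
    ∀ y : Y, ∃ xbar : X, A xbar = y ∧ ∀ x : X, A x = y → J xbar ≤ J x :=
  exists_global_minimizer_general Jt hsymm hweak J hJ hpos hcompact A hA
end

section
/- The map L : Y → X sending y to the unique minimizer of J on {x : Ax = y} is linear: L(αa + βb) = αL(a) + βL(b) for all a, b ∈ Y and α, β ∈ ℝ. -/
/-! The constraint sets `{x | A x = y}` are translates of `ker A`, and a point `x` minimizes the
quadratic form `Q x = J̃(x, x)` on `x + ker A` exactly when `J̃(x, ·)` vanishes on `ker A`: necessity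
because `t ↦ Q (x + t z) - Q x = 2 t J̃(x, z) + t² Q z` is nonnegative, so its discriminant
vanishes; sufficiency because then `Q (x + z) = Q x + Q z ≥ Q x`. The orthogonality condition is
linear in `x`, so `α L a + β L b` satisfies it and lies over `α a + β b`; by uniqueness it is
`L (α a + β b)`. -/

theorem LinearMap.apply_add_add_of_symm {R X : Type*} [CommRing R] [AddCommGroup X] [Module R X]
    {B : X →ₗ[R] X →ₗ[R] R} (hB : ∀ x y, B x y = B y x) (x z : X) :
    B (x + z) (x + z) = B x x + 2 * B x z + B z z := by
  simp only [map_add, LinearMap.add_apply, hB z x]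
  ring

section SymmetricBilinear

variable {𝕜 X F Y : Type*} [Field 𝕜] [LinearOrder 𝕜] [IsStrictOrderedRing 𝕜]
  [AddCommGroup X] [Module 𝕜 X] [AddCommGroup Y] [Module 𝕜 Y]
  [FunLike F X Y] [LinearMapClass F 𝕜 X Y]
  {B : X →ₗ[𝕜] X →ₗ[𝕜] 𝕜}

theorem LinearMap.apply_eq_zero_of_forall_le_apply_self (hB : ∀ x y, B x y = B y x) (A : F)
    {x : X} (hmin : ∀ x', A x' = A x → B x x ≤ B x' x') {z : X} (hz : A z = 0) :
    B x z = 0 := by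
  have hquad : ∀ t : 𝕜, 0 ≤ B z z * (t * t) + 2 * B x z * t + 0 := fun t => by
    have h := hmin (x + t • z) (by simp [hz])
    rw [LinearMap.apply_add_add_of_symm hB] at h
    simp only [map_smul, LinearMap.smul_apply, smul_eq_mul] at h
    linarith
  have hdisc := discrim_le_zero hquad
  rw [discrim] at hdisc
  nlinarith [sq_nonneg (B x z)]

theorem LinearMap.apply_self_le_of_forall_apply_eq_zero (hB : ∀ x y, B x y = B y x)
    (hpos : ∀ z, 0 ≤ B z z) (A : F) {x : X} (horth : ∀ z, A z = 0 → B x z = 0)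
    {x' : X} (hx' : A x' = A x) : B x x ≤ B x' x' := by
  have hz : A (x' - x) = 0 := by rw [map_sub, hx', sub_self]
  have hsplit := LinearMap.apply_add_add_of_symm hB x (x' - x)
  rw [add_sub_cancel, horth _ hz] at hsplit
  linarith [hpos (x' - x)]

end SymmetricBilinear

theorem minimizer_map_linear_general
    {X Y : Type*} [NormedAddCommGroup X] [NormedSpace ℝ X]
    [NormedAddCommGroup Y] [NormedSpace ℝ Y]
    (Jt : X →ₗ[ℝ] X →ₗ[ℝ] ℝ)
    (hsymm : ∀ x y, Jt x y = Jt y x)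
    (J : X → ℝ) (hJ : ∀ x, J x = Jt x x)
    (hpos : ∀ x, 0 ≤ J x)
    (A : X →L[ℝ] Y)
    (L : Y → X)
    (hLmin : ∀ y : Y, A (L y) = y ∧ ∀ x : X, A x = y → J (L y) ≤ J x)
    (hLuniq : ∀ (y : Y) (x : X), A x = y → (∀ x' : X, A x' = y → J x ≤ J x') → x = L y) :
    ∀ (a b : Y) (α β : ℝ), L (α • a + β • b) = α • L a + β • L b := by
  obtain rfl : J = fun x => Jt x x := funext hJ
  have hAL y : A (L y) = y := (hLmin y).1
  have horthL y z (hz : A z = 0) : Jt (L y) z = 0 :=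
    Jt.apply_eq_zero_of_forall_le_apply_self hsymm A
      (fun x' hx' => (hLmin y).2 x' (hx'.trans (hAL y))) hz
  intro a b α β
  set w := α • L a + β • L b
  have hAw : A w = α • a + β • b := by simp [w, hAL]
  have horth z (hz : A z = 0) : Jt w z = 0 := by simp [w, horthL a z hz, horthL b z hz]
  exact (hLuniq _ w hAw fun x' hx' =>
    Jt.apply_self_le_of_forall_apply_eq_zero hsymm hpos A horth (hx'.trans hAw.symm)).symm

/-- the map `L` sending `y` to the unique minimizer of `J` on
`{x : A x = y}` is linear. -/
theorem minimizer_map_linear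
    {X Y : Type*} [NormedAddCommGroup X] [NormedSpace ℝ X]
    [NormedAddCommGroup Y] [NormedSpace ℝ Y]
    (Jt : X →ₗ[ℝ] X →ₗ[ℝ] ℝ)
    (hsymm : ∀ x y, Jt x y = Jt y x)
    (hbdd : ∃ M : ℝ, ∀ x y, |Jt x y| ≤ M * ‖x‖ * ‖y‖)
    (hweak : ∀ (y : X) (u : ℕ → X) (x : X), WeakConv u x →
      Filter.Tendsto (fun n => Jt (u n) y) Filter.atTop (nhds (Jt x y)))
    (J : X → ℝ) (hJ : ∀ x, J x = Jt x x)
    (hpos : ∀ x, 0 ≤ J x)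
    (hzero : ∀ x, J x = 0 → x = 0)
    (hcompact : ∀ c > (0:ℝ), ∀ u : ℕ → X, (∀ n, J (u n) ≤ c) →
      ∃ (x : X) (φ : ℕ → ℕ), StrictMono φ ∧ J x ≤ c ∧ WeakConv (u ∘ φ) x)
    (A : X →L[ℝ] Y) (hA : Function.Surjective A)
    (L : Y → X)
    (hLmin : ∀ y : Y, A (L y) = y ∧ ∀ x : X, A x = y → J (L y) ≤ J x)
    (hLuniq : ∀ (y : Y) (x : X), A x = y → (∀ x' : X, A x' = y → J x ≤ J x') → x = L y) :
    ∀ (a b : Y) (α β : ℝ), L (α • a + β • b) = α • L a + β • L b :=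
  minimizer_map_linear_general Jt hsymm J hJ hpos A L hLmin hLuniq
end

section
/- Let X, Y be Banach spaces, J : X → ℝ and F : X → Y continuously (Fréchet) differentiable, and let x̄ be a local minimum of J subject to the constraint F(x) = 0. If F'(x̄) : X → Y is surjective, then there exists y* ∈ Y* such that J'(x̄) + y* ∘ F'(x̄) = 0. -/
/-- Karush–Kuhn–Tucker / Lagrange multiplier theorem in Banach
spaces: at a local minimum of `J` subject to `F = 0` with surjective `F'(x̄)`,
there is `y* ∈ Y*` with `J'(x̄) + y* ∘ F'(x̄) = 0`. -/
theorem kkt_lagrange_multiplier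
    {X Y : Type*} [NormedAddCommGroup X] [NormedSpace ℝ X] [CompleteSpace X]
    [NormedAddCommGroup Y] [NormedSpace ℝ Y] [CompleteSpace Y]
    (J : X → ℝ) (F : X → Y)
    (J' : X → X →L[ℝ] ℝ) (F' : X → X →L[ℝ] Y)
    (hJ : ∀ x, HasFDerivAt J (J' x) x) (hJ' : Continuous J')
    (hF : ∀ x, HasFDerivAt F (F' x) x) (hF' : Continuous F')
    (xbar : X) (hcon : F xbar = 0)
    (hmin : ∃ U ∈ nhds xbar, ∀ x ∈ U, F x = 0 → J xbar ≤ J x)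
    (hsurj : Function.Surjective (F' xbar)) :
    ∃ g : Y →L[ℝ] ℝ, J' xbar + g.comp (F' xbar) = 0 := by
  -- strict differentiability from C¹
  have hJs : HasStrictFDerivAt J (J' xbar) xbar :=
    hasStrictFDerivAt_of_hasFDerivAt_of_continuousAt
      (Filter.Eventually.of_forall hJ) hJ'.continuousAt
  have hFs : HasStrictFDerivAt F (F' xbar) xbar :=
    hasStrictFDerivAt_of_hasFDerivAt_of_continuousAt
      (Filter.Eventually.of_forall hF) hF'.continuousAt
  -- local extremum on the constraint set
  obtain ⟨U, hU, hUmin⟩ := hmin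
  have hextr : IsLocalExtrOn J {x | F x = F xbar} xbar := by
    left
    have : ∀ᶠ x in nhdsWithin xbar {x | F x = F xbar}, J xbar ≤ J x := by
      filter_upwards [nhdsWithin_le_nhds hU, self_mem_nhdsWithin] with x hx hx'
      exact hUmin x hx (by simpa [hcon] using hx')
    exact this
  obtain ⟨Λ, Λ₀, hne, hΛ⟩ := hextr.exists_linear_map_of_hasStrictFDerivAt hFs hJs
  -- Λ₀ ≠ 0
  have hΛ₀ : Λ₀ ≠ 0 := by
    intro h0
    have hΛ0 : Λ = 0 := by
      ext y
      obtain ⟨x, rfl⟩ := hsurj y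
      have := hΛ x
      simpa [h0] using this
    exact hne (by simp [hΛ0, h0])
  -- Λ is continuous: use the open mapping theorem
  obtain ⟨C, Cpos, hC⟩ := ContinuousLinearMap.exists_preimage_norm_le (F' xbar) hsurj
  have hbound : ∀ y : Y, ‖Λ y‖ ≤ (|Λ₀| * ‖J' xbar‖ * C) * ‖y‖ := by
    intro y
    obtain ⟨x, hx, hxn⟩ := hC y
    have h1 : Λ y = -(Λ₀ • J' xbar x) := by
      have := hΛ x
      rw [hx] at this
      linarith [this]
    have : ‖Λ y‖ = |Λ₀| * ‖J' xbar x‖ := by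
      rw [h1]; simp [abs_mul, Real.norm_eq_abs]
    rw [this]
    calc |Λ₀| * ‖J' xbar x‖ ≤ |Λ₀| * (‖J' xbar‖ * ‖x‖) := by
          gcongr; exact (J' xbar).le_opNorm x
      _ ≤ |Λ₀| * (‖J' xbar‖ * (C * ‖y‖)) := by gcongr
      _ = (|Λ₀| * ‖J' xbar‖ * C) * ‖y‖ := by ring
  let Λc : Y →L[ℝ] ℝ := LinearMap.mkContinuous Λ _ hbound
  refine ⟨Λ₀⁻¹ • Λc, ?_⟩
  ext x
  have := hΛ x
  have hΛcx : Λc (F' xbar x) = Λ (F' xbar x) := rfl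
  simp only [ContinuousLinearMap.add_apply, ContinuousLinearMap.coe_comp',
    Function.comp_apply, ContinuousLinearMap.coe_smul', Pi.smul_apply,
    ContinuousLinearMap.zero_apply, hΛcx, smul_eq_mul]
  rw [smul_eq_mul] at this
  have h2 : Λ ((F' xbar) x) = -(Λ₀ * (J' xbar) x) := by linarith
  rw [h2]
  field_simp
  ring
end
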